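/- Let n be an odd positive integer with n ≡ 3 (mod 8). Then hmin(n) = (n+5)/4, and for every odd d with 1 ≤ d ≤ n: hmin(n, d) = hmin(n) if and only if (n+1)/4 ≤ d ≤ (n+3)/2. -/

import Mathlib

open Finset
open scoped Classical

/-- The closed neighborhood `N[v] = {v} ∪ N(v)` of a vertex `v` in a simple graph `G`.
A `d`-regular graph with loops is modeled by a simple graph in which every
closed neighborhood has size `d`. -/
noncomputable def closedNbhd {n : ℕ} (G : SimpleGraph (Fin n)) (v : Fin n) : Finset (Fin n) :=
  Finset.univ.filter fun u => u = v ∨ G.Adj v u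

/-- A configuration with parameters `(n, d, h)`: a simple graph `G` on `n` vertices all
of whose closed neighborhoods have size `d` (i.e. a `d`-regular graph with loops),
together with an opinion function `f : V → {1, -1}` having exactly `h` happy vertices. -/
def IsConfig {n : ℕ} (d h : ℕ) (G : SimpleGraph (Fin n)) (f : Fin n → ℤ) : Prop :=
  (∀ v, (closedNbhd G v).card = d) ∧ (∀ v, f v = 1 ∨ f v = -1) ∧
  (Finset.univ.filter fun v => f v = 1).card = h

/-- The number of proponents: vertices `v` with `∑_{u ∈ N[v]} f u ≥ 1`. -/
noncomputable def numProponents {n : ℕ} (G : SimpleGraph (Fin n)) (f : Fin n → ℤ) : ℕ :=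
  (Finset.univ.filter fun v => 1 ≤ ∑ u ∈ closedNbhd G v, f u).card

/-- A configuration is approving if more than `n/2` of its vertices are proponents. -/
def IsApproving {n : ℕ} (G : SimpleGraph (Fin n)) (f : Fin n → ℤ) : Prop :=
  2 * numProponents G f > n

/-- `hmin n d`: the least `h` for which an approving configuration with parameters
`(n, d, h)` exists. -/
noncomputable def hmin (n d : ℕ) : ℕ :=
  sInf {h : ℕ | ∃ (G : SimpleGraph (Fin n)) (f : Fin n → ℤ), IsConfig d h G f ∧ IsApproving G f}

/-- `hmax n d`: the greatest `h ≤ n` for which a disapproving configuration with parameters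
`(n, d, h)` exists. -/
noncomputable def hmax (n d : ℕ) : ℕ :=
  sSup {h : ℕ | h ≤ n ∧
    ∃ (G : SimpleGraph (Fin n)) (f : Fin n → ℤ), IsConfig d h G f ∧ ¬ IsApproving G f}

/-- `hminN n`: the minimum of `hmin n d` over odd `d` with `1 ≤ d ≤ n`. -/
noncomputable def hminN (n : ℕ) : ℕ :=
  sInf {m : ℕ | ∃ d : ℕ, Odd d ∧ 1 ≤ d ∧ d ≤ n ∧ m = hmin n d}

/-!
Double counting the pairs `(v, u)` with `u` a happy vertex of `N[v]` shows that every approving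
configuration satisfies `(n + 1)(d + 1) ≤ 4hd`, and a single proponent already forces
`d + 1 ≤ 2h`. For `n = 8s + 3` this gives `h ≥ 2s + 2`, and `h ≥ 2s + 3` as soon as `d < 2s + 1`
or `d > 4s + 3`.

The bound `2s + 2` is attained by two constructions. For `d = 2r + 1 ≤ 4s + 1`, take the `r`-th
power of the cycle on `4s + 2` vertices, with happy vertices those whose residue mod `2s + 1` is
even, next to an all-sad `r`-th power of the cycle on `4s + 1` vertices: every window of
`2r + 1 ≥ 2s + 1` consecutive vertices of the first cycle has a happy majority. For `d = 4s + 3`,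
join an independent set of `4s + 1` vertices, `2s + 2` of them happy, to all vertices of a
perfect matching on `4s + 2` sad vertices (for `s = 0`, take the triangle with two happy vertices).
-/

namespace SimpleGraph

variable {V W : Type*} [Fintype V] [Fintype W]

noncomputable def closedNbhdFinset (G : SimpleGraph V) (v : V) : Finset V :=
  {u | u = v ∨ G.Adj v u}

variable {G : SimpleGraph V} {u v : V}

@[simp] lemma mem_closedNbhdFinset : u ∈ G.closedNbhdFinset v ↔ u = v ∨ G.Adj v u := by
  simp [closedNbhdFinset]

lemma mem_closedNbhdFinset_comm : u ∈ G.closedNbhdFinset v ↔ v ∈ G.closedNbhdFinset u := by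
  simp [eq_comm, G.adj_comm]

lemma closedNbhdFinset_comap (e : W ≃ V) (G : SimpleGraph V) (w : W) :
    (G.comap e).closedNbhdFinset w = (G.closedNbhdFinset (e w)).map e.symm.toEmbedding := by
  ext u
  simp [Finset.mem_map_equiv]

lemma closedNbhdFinset_sum_inl (G : SimpleGraph V) (H : SimpleGraph W) (v : V) :
    (G ⊕g H).closedNbhdFinset (.inl v) = (G.closedNbhdFinset v).map .inl := by
  ext (u | u) <;> simp

lemma closedNbhdFinset_sum_inr (G : SimpleGraph V) (H : SimpleGraph W) (w : W) :
    (G ⊕g H).closedNbhdFinset (.inr w) = (H.closedNbhdFinset w).map .inr := by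
  ext (u | u) <;> simp

lemma closedNbhdFinset_top (v : V) : (⊤ : SimpleGraph V).closedNbhdFinset v = univ := by
  ext u
  simpa [eq_comm] using em (v = u)

lemma closedNbhdFinset_circulantGraph [AddCommGroup V] {S : Finset V} (h0 : 0 ∈ S)
    (hneg : ∀ x ∈ S, -x ∈ S) (v : V) :
    (circulantGraph (S : Set V)).closedNbhdFinset v = S.map (addLeftEmbedding v) := by
  ext u
  have hsymm : v - u ∈ S ↔ u - v ∈ S :=
    ⟨fun h => by simpa using hneg _ h, fun h => by simpa using hneg _ h⟩
  rcases eq_or_ne u v with rfl | huv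
  · simpa using h0
  · simp only [mem_closedNbhdFinset, circulantGraph_adj, mem_coe, huv, false_or, hsymm, or_self,
      huv.symm, not_false_eq_true, true_and, mem_map, addLeftEmbedding_apply]
    exact ⟨fun h => ⟨u - v, h, add_sub_cancel v u⟩,
      fun ⟨a, ha, hau⟩ => hau ▸ by simpa using ha⟩

lemma sum_card_filter_closedNbhdFinset (G : SimpleGraph V) (p : V → Prop) [DecidablePred p] :
    ∑ v, #{u ∈ G.closedNbhdFinset v | p u} = ∑ u with p u, #(G.closedNbhdFinset u) := by
  convert sum_card_bipartiteAbove_eq_sum_card_bipartiteBelow (s := univ) (t := {u | p u})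
    (r := fun v u => u ∈ G.closedNbhdFinset v) using 3 with v _ u _
  · ext; simp [bipartiteAbove, and_comm]
  · ext; simp [bipartiteBelow, mem_closedNbhdFinset_comm (v := u)]

end SimpleGraph

open SimpleGraph

lemma sum_eq_two_mul_card_filter_sub_card {α : Type*} (s : Finset α) {f : α → ℤ}
    (hf : ∀ x ∈ s, f x = 1 ∨ f x = -1) :
    ∑ x ∈ s, f x = 2 * #{x ∈ s | f x = 1} - #s := by
  have hone : ∑ x ∈ s with f x = 1, f x = #{x ∈ s | f x = 1} := by
    rw [sum_congr rfl fun x hx => (mem_filter.1 hx).2]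
    simp
  have hneg : ∑ x ∈ s with ¬f x = 1, f x = -#{x ∈ s | ¬f x = 1} := by
    rw [sum_congr rfl fun x hx => (hf x (mem_filter.1 hx).1).resolve_left (mem_filter.1 hx).2]
    simp
  have hcard := card_filter_add_card_filter_not (s := s) (fun x => f x = 1)
  rw [← sum_filter_add_sum_filter_not s (fun x => f x = 1), hone, hneg]
  omega

section Config

variable {V W : Type*} [Fintype V] [Fintype W] {d h : ℕ}

-- `IsConfig d h G f ∧ IsApproving G f` on an arbitrary finite vertex type, so that the
-- constructions below may use `ZMod` and sum types.
structure IsApprovingConfig (d h : ℕ) (G : SimpleGraph V) (f : V → ℤ) : Prop where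
  card_closedNbhdFinset : ∀ v, #(G.closedNbhdFinset v) = d
  sign : ∀ v, f v = 1 ∨ f v = -1
  card_happy : #{v | f v = 1} = h
  card_lt : Fintype.card V < 2 * #{v | 1 ≤ ∑ u ∈ G.closedNbhdFinset v, f u}

namespace IsApprovingConfig

variable {G : SimpleGraph V} {f : V → ℤ}

lemma one_le_sum_iff (hc : IsApprovingConfig d h G f) (v : V) :
    1 ≤ ∑ u ∈ G.closedNbhdFinset v, f u ↔
      d + 1 ≤ 2 * #{u ∈ G.closedNbhdFinset v | f u = 1} := by
  rw [sum_eq_two_mul_card_filter_sub_card _ fun u _ => hc.sign u, hc.card_closedNbhdFinset]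
  omega

lemma add_one_le_two_mul (hc : IsApprovingConfig d h G f) : d + 1 ≤ 2 * h := by
  obtain ⟨v, hv⟩ := card_pos.1 (show 0 < #{v | 1 ≤ ∑ u ∈ G.closedNbhdFinset v, f u} by
    have := hc.card_lt; omega)
  have hhappy : #{u ∈ G.closedNbhdFinset v | f u = 1} ≤ h :=
    hc.card_happy ▸ card_le_card (filter_subset_filter _ (subset_univ _))
  have := (hc.one_le_sum_iff v).1 (mem_filter.1 hv).2
  omega

lemma card_add_one_mul_le (hc : IsApprovingConfig d h G f) :
    (Fintype.card V + 1) * (d + 1) ≤ 4 * (h * d) := by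
  set P : Finset V := {v | 1 ≤ ∑ u ∈ G.closedNbhdFinset v, f u}
  calc (Fintype.card V + 1) * (d + 1) ≤ 2 * #P * (d + 1) := by
        gcongr; exact hc.card_lt
    _ = 2 * ∑ _v ∈ P, (d + 1) := by rw [sum_const, smul_eq_mul]; ring
    _ ≤ 2 * ∑ v ∈ P, 2 * #{u ∈ G.closedNbhdFinset v | f u = 1} := by
        gcongr with v hv
        exact (hc.one_le_sum_iff v).1 (mem_filter.1 hv).2
    _ ≤ 2 * ∑ v, 2 * #{u ∈ G.closedNbhdFinset v | f u = 1} := by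
        gcongr; exact subset_univ P
    _ = 4 * (h * d) := by
        rw [← mul_sum, sum_card_filter_closedNbhdFinset,
          sum_congr rfl fun u _ => hc.card_closedNbhdFinset u, sum_const, smul_eq_mul,
          hc.card_happy]
        ring

lemma comap (hc : IsApprovingConfig d h G f) (e : W ≃ V) :
    IsApprovingConfig d h (G.comap e) (f ∘ e) where
  card_closedNbhdFinset w := by rw [closedNbhdFinset_comap, card_map, hc.card_closedNbhdFinset]
  sign w := hc.sign (e w)
  card_happy := hc.card_happy ▸ card_equiv e (by simp)
  card_lt := by
    rw [Fintype.card_congr e]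
    convert hc.card_lt using 2
    exact card_equiv e fun w => by simp [closedNbhdFinset_comap, sum_map]

end IsApprovingConfig

lemma isApprovingConfig_iff {n : ℕ} {G : SimpleGraph (Fin n)} {f : Fin n → ℤ} :
    IsApprovingConfig d h G f ↔ IsConfig d h G f ∧ IsApproving G f := by
  have hN : ∀ v, closedNbhd G v = G.closedNbhdFinset v := fun v => by ext; simp [closedNbhd]
  simp only [IsConfig, IsApproving, numProponents, hN]
  exact ⟨fun ⟨h1, h2, h3, h4⟩ => ⟨⟨h1, h2, h3⟩, by simpa using h4⟩,
    fun ⟨⟨h1, h2, h3⟩, h4⟩ => ⟨h1, h2, h3, by simpa using h4⟩⟩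

variable {n : ℕ} {G : SimpleGraph V} {f : V → ℤ}

lemma IsApprovingConfig.exists_fin (hV : Fintype.card V = n) (hc : IsApprovingConfig d h G f) :
    ∃ (G : SimpleGraph (Fin n)) (f : Fin n → ℤ), IsConfig d h G f ∧ IsApproving G f :=
  ⟨_, _, isApprovingConfig_iff.1 (hc.comap (Fintype.equivFinOfCardEq hV).symm)⟩

lemma hmin_le (hV : Fintype.card V = n) (hc : IsApprovingConfig d h G f) : hmin n d ≤ h :=
  Nat.sInf_le (hc.exists_fin hV)

lemma exists_isApprovingConfig_hmin (hV : Fintype.card V = n) (hc : IsApprovingConfig d h G f) :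
    ∃ (G' : SimpleGraph (Fin n)) (f' : Fin n → ℤ), IsApprovingConfig d (hmin n d) G' f' := by
  have hmem : hmin n d ∈ {h | ∃ (G : SimpleGraph (Fin n)) (f : Fin n → ℤ),
      IsConfig d h G f ∧ IsApproving G f} := Nat.sInf_mem ⟨h, hc.exists_fin hV⟩
  obtain ⟨G', f', hc'⟩ := hmem
  exact ⟨G', f', isApprovingConfig_iff.2 hc'⟩

end Config

lemma ZMod.sum_comp_val {β : Type*} [AddCommMonoid β] (M : ℕ) [NeZero M] (φ : ℕ → β) :
    ∑ x : ZMod M, φ x.val = ∑ i ∈ range M, φ i := by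
  refine sum_nbij (·.val) (fun x _ => mem_range.2 (ZMod.val_lt x))
    (fun x _ y _ hxy => ZMod.val_injective M hxy) (fun i hi => ?_) fun _ _ => rfl
  exact ⟨i, mem_univ _, ZMod.val_cast_of_lt (mem_range.1 hi)⟩

section CyclePower

variable {M r : ℕ}

def centeredInterval (M r : ℕ) : Finset (ZMod M) :=
  (range (2 * r + 1)).image fun i : ℕ => (i : ZMod M) - r

def cyclePowerGraph (M r : ℕ) : SimpleGraph (ZMod M) :=
  circulantGraph (centeredInterval M r : Set (ZMod M))

lemma zero_mem_centeredInterval : 0 ∈ centeredInterval M r :=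
  mem_image.2 ⟨r, mem_range.2 (by omega), sub_self _⟩

lemma neg_mem_centeredInterval {x : ZMod M} (hx : x ∈ centeredInterval M r) :
    -x ∈ centeredInterval M r := by
  obtain ⟨i, hi, rfl⟩ := mem_image.1 hx
  have hi : i ≤ 2 * r := Nat.lt_succ_iff.1 (mem_range.1 hi)
  refine mem_image.2 ⟨2 * r - i, mem_range.2 (by omega), ?_⟩
  push_cast [hi]
  ring

lemma injOn_centeredInterval (hr : 2 * r + 1 ≤ M) :
    Set.InjOn (fun i : ℕ => (i : ZMod M) - r) (range (2 * r + 1)) := by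
  intro i hi j hj hij
  have hi : i < M := (mem_range.1 hi).trans_le hr
  have hj : j < M := (mem_range.1 hj).trans_le hr
  simpa [Nat.mod_eq_of_lt hi, Nat.mod_eq_of_lt hj] using congrArg ZMod.val (sub_left_inj.1 hij)

variable [NeZero M] (v : ZMod M)

lemma closedNbhdFinset_cyclePowerGraph :
    (cyclePowerGraph M r).closedNbhdFinset v = (centeredInterval M r).map (addLeftEmbedding v) :=
  closedNbhdFinset_circulantGraph zero_mem_centeredInterval (fun _ => neg_mem_centeredInterval) v

lemma card_closedNbhdFinset_cyclePowerGraph (hr : 2 * r + 1 ≤ M) :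
    #((cyclePowerGraph M r).closedNbhdFinset v) = 2 * r + 1 := by
  rw [closedNbhdFinset_cyclePowerGraph, card_map, centeredInterval,
    card_image_of_injOn (injOn_centeredInterval hr), card_range]

lemma sum_closedNbhdFinset_cyclePowerGraph (hr : 2 * r + 1 ≤ M) (φ : ℕ → ℤ) :
    ∑ u ∈ (cyclePowerGraph M r).closedNbhdFinset v, φ u.val =
      ∑ i ∈ range (2 * r + 1), φ (((v - r).val + i) % M) := by
  rw [closedNbhdFinset_cyclePowerGraph, sum_map, centeredInterval,
    sum_image (injOn_centeredInterval hr)]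
  refine sum_congr rfl fun i _ => ?_
  rw [addLeftEmbedding_apply, ← add_sub_assoc, add_sub_right_comm, ZMod.val_add, ZMod.val_natCast,
    Nat.add_mod_mod]

end CyclePower

theorem Function.Periodic.sum_range_comp_add {β : Type*} [AddCommGroup β] {g : ℕ → β}
    {m : ℕ} (hg : Function.Periodic g m) (w : ℕ) :
    ∑ i ∈ range m, g (w + i) = ∑ i ∈ range m, g i := by
  induction w with
  | zero => simp
  | succ w ih =>
    have hshift := (sum_range_succ' (fun i => g (w + i)) m).symm.trans
      (sum_range_succ (fun i => g (w + i)) m)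
    rw [add_zero, hg] at hshift
    simpa [add_assoc, add_comm 1, ← ih] using add_right_cancel hshift

section AlternatingWindow

variable {m : ℕ}

lemma periodic_neg_one_pow_mod : Function.Periodic (fun j => (-1 : ℤ) ^ (j % m)) m := by
  intro j
  simp

lemma sum_range_neg_one_pow_mod (hm : Odd m) (w : ℕ) :
    ∑ i ∈ range m, (-1 : ℤ) ^ ((w + i) % m) = 1 := by
  rw [periodic_neg_one_pow_mod.sum_range_comp_add (g := fun j => (-1 : ℤ) ^ (j % m)),
    sum_congr rfl fun i hi => by rw [Nat.mod_eq_of_lt (mem_range.1 hi)], neg_one_geom_sum,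
    if_neg (Nat.not_even_iff_odd.2 hm)]

-- Since `m` is odd, the residue `m - 1` is even: two consecutive residues are never both odd.
lemma neg_one_pow_mod_add_neg_one_pow_succ_mod_nonneg (hm : Odd m) (x : ℕ) :
    0 ≤ (-1 : ℤ) ^ (x % m) + (-1) ^ ((x + 1) % m) := by
  rcases Nat.even_or_odd (x % m) with he | ho
  · rw [he.neg_one_pow]
    rcases neg_one_pow_eq_or ℤ ((x + 1) % m) with h | h <;> rw [h] <;> norm_num
  · have hlt : x % m + 1 < m := by
      have := Nat.mod_lt x hm.pos
      rcases hm with ⟨k, rfl⟩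
      rcases ho with ⟨j, hj⟩
      omega
    rw [Nat.add_mod_of_add_mod_lt (by rwa [Nat.one_mod_eq_one.2 (by omega)]),
      Nat.one_mod_eq_one.2 (by omega), pow_succ]
    simp

lemma sum_range_two_mul_neg_one_pow_mod_nonneg (hm : Odd m) (w t : ℕ) :
    0 ≤ ∑ i ∈ range (2 * t), (-1 : ℤ) ^ ((w + i) % m) := by
  induction t with
  | zero => simp
  | succ t ih =>
    rw [mul_add, mul_one, sum_range_succ, sum_range_succ, ← add_assoc w (2 * t) 1]
    linarith [neg_one_pow_mod_add_neg_one_pow_succ_mod_nonneg hm (w + 2 * t)]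

lemma one_le_sum_range_neg_one_pow_mod (hm : Odd m) (w t : ℕ) :
    1 ≤ ∑ i ∈ range (2 * t + m), (-1 : ℤ) ^ ((w + i) % m) := by
  rw [sum_range_add]
  simp_rw [← add_assoc w (2 * t)]
  linarith [sum_range_two_mul_neg_one_pow_mod_nonneg hm w t,
    sum_range_neg_one_pow_mod hm (w + 2 * t)]

lemma sum_neg_one_pow_val_mod_two_mul_add_one (s : ℕ) :
    ∑ x : ZMod (2 * (2 * s + 1)), (-1 : ℤ) ^ (x.val % (2 * s + 1)) = 2 := by
  have hm : Odd (2 * s + 1) := odd_two_mul_add_one s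
  rw [ZMod.sum_comp_val _ fun j => (-1 : ℤ) ^ (j % (2 * s + 1)), two_mul (2 * s + 1),
    sum_range_add, sum_range_neg_one_pow_mod hm]
  have hfirst := sum_range_neg_one_pow_mod hm 0
  simp only [zero_add] at hfirst
  linarith

end AlternatingWindow

section Constructions

variable {V W : Type*} [Fintype V] [Fintype W]

lemma card_le_card_filter_inl {p : V ⊕ W → Prop} [DecidablePred p] (hp : ∀ v, p (.inl v)) :
    Fintype.card V ≤ #{x | p x} := by
  rw [← card_univ, ← card_map .inl]
  exact card_le_card fun x hx => by obtain ⟨v, -, rfl⟩ := mem_map.1 hx; simpa using hp v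

lemma card_le_card_filter_inr {p : V ⊕ W → Prop} [DecidablePred p] (hp : ∀ w, p (.inr w)) :
    Fintype.card W ≤ #{x | p x} := by
  rw [← card_univ, ← card_map .inr]
  exact card_le_card fun x hx => by obtain ⟨w, -, rfl⟩ := mem_map.1 hx; simpa using hp w

lemma isApprovingConfig_cyclePowerGraph_one {M r : ℕ} [NeZero M] (hr : 2 * r + 1 ≤ M) :
    IsApprovingConfig (2 * r + 1) M (cyclePowerGraph M r) 1 where
  card_closedNbhdFinset v := card_closedNbhdFinset_cyclePowerGraph v hr
  sign _ := Or.inl rfl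
  card_happy := by simp
  card_lt := by
    have hM := Nat.pos_of_neZero M
    simp [card_closedNbhdFinset_cyclePowerGraph _ hr]
    omega

lemma isApprovingConfig_top {f : V → ℤ} (hf : ∀ v, f v = 1 ∨ f v = -1)
    (hsum : 1 ≤ ∑ v, f v) :
    IsApprovingConfig (Fintype.card V) #{v | f v = 1} ⊤ f where
  card_closedNbhdFinset v := by rw [closedNbhdFinset_top, card_univ]
  sign := hf
  card_happy := rfl
  card_lt := by
    have : 0 < Fintype.card V := by
      by_contra! h
      simp [Fintype.card_eq_zero_iff.1 (Nat.le_zero.1 h)] at hsum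
    simp only [closedNbhdFinset_top, hsum, filter_true, card_univ]
    omega

lemma one_le_sum_closedNbhdFinset_cyclePowerGraph {M m r : ℕ} [NeZero M] (hm : Odd m)
    (hmr : m ≤ 2 * r + 1) (hr : 2 * r + 1 ≤ M) (hmM : m ∣ M) (v : ZMod M) :
    1 ≤ ∑ u ∈ (cyclePowerGraph M r).closedNbhdFinset v, (-1 : ℤ) ^ (u.val % m) := by
  rw [sum_closedNbhdFinset_cyclePowerGraph v hr fun j => (-1 : ℤ) ^ (j % m)]
  simp_rw [Nat.mod_mod_of_dvd _ hmM]
  obtain ⟨t, ht⟩ : ∃ t, 2 * r + 1 = 2 * t + m := ⟨(2 * r + 1 - m) / 2, by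
    obtain ⟨k, rfl⟩ := hm; omega⟩
  rw [ht]
  exact one_le_sum_range_neg_one_pow_mod hm _ t

theorem isApprovingConfig_cyclePowerGraph_sum {s r : ℕ} (hsr : s ≤ r) (hr : r ≤ 2 * s) :
    IsApprovingConfig (2 * r + 1) (2 * s + 2)
      (cyclePowerGraph (2 * (2 * s + 1)) r ⊕g cyclePowerGraph (4 * s + 1) r)
      (Sum.elim (fun x => (-1) ^ (x.val % (2 * s + 1))) fun _ => -1) := by
  have hm : Odd (2 * s + 1) := odd_two_mul_add_one s
  set f : ZMod (2 * (2 * s + 1)) ⊕ ZMod (4 * s + 1) → ℤ :=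
    Sum.elim (fun x => (-1) ^ (x.val % (2 * s + 1))) fun _ => -1
  have hsign : ∀ x, f x = 1 ∨ f x = -1 := by
    rintro (x | x)
    · exact neg_one_pow_eq_or ℤ _
    · exact Or.inr rfl
  refine ⟨?_, hsign, ?_, ?_⟩
  · rintro (v | v)
    · rw [closedNbhdFinset_sum_inl, card_map, card_closedNbhdFinset_cyclePowerGraph _ (by omega)]
    · rw [closedNbhdFinset_sum_inr, card_map, card_closedNbhdFinset_cyclePowerGraph _ (by omega)]
  · have hsum := sum_eq_two_mul_card_filter_sub_card univ fun x _ => hsign x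
    have htotal : ∑ x, f x = 1 - 4 * s := by
      simp only [f, Fintype.sum_sum_type, Sum.elim_inl, Sum.elim_inr,
        sum_neg_one_pow_val_mod_two_mul_add_one, sum_const, card_univ, ZMod.card, nsmul_eq_mul]
      push_cast
      ring
    rw [htotal, card_univ, Fintype.card_sum, ZMod.card, ZMod.card] at hsum
    push_cast at hsum
    omega
  · refine lt_of_lt_of_le ?_ (Nat.mul_le_mul_left 2 (card_le_card_filter_inl fun v => ?_))
    · simp only [Fintype.card_sum, ZMod.card]
      omega
    · rw [closedNbhdFinset_sum_inl, sum_map]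
      exact one_le_sum_closedNbhdFinset_cyclePowerGraph hm (by omega) (by omega)
        (dvd_mul_left _ _) v

end Constructions

section JoinMatching

def joinMatching (L K : Type*) : SimpleGraph (L ⊕ K × Bool) where
  Adj
    | .inl _, .inl _ => False
    | .inr p, .inr q => p.1 = q.1 ∧ p.2 ≠ q.2
    | _, _ => True
  symm := ⟨by rintro (_ | ⟨_, _⟩) (_ | ⟨_, _⟩) h <;> simp_all [eq_comm]⟩
  loopless := ⟨by rintro (_ | _) h <;> simp_all⟩

variable {L K : Type*} [Fintype L] [Fintype K]

lemma closedNbhdFinset_joinMatching_inl (a : L) :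
    (joinMatching L K).closedNbhdFinset (.inl a) = ({a} : Finset L).disjSum univ := by
  ext (x | ⟨k, b⟩) <;> simp [joinMatching]

lemma closedNbhdFinset_joinMatching_inr (k : K) (b : Bool) :
    (joinMatching L K).closedNbhdFinset (.inr (k, b)) = univ.disjSum {(k, b), (k, !b)} := by
  ext (x | ⟨k', b'⟩)
  · simp [joinMatching]
  · cases b <;> cases b' <;> simp [joinMatching, eq_comm]

-- Every vertex of `K × Bool` sees all of `A ⊕ B` (net opinion `3`) and exactly two sad vertices.
theorem isApprovingConfig_joinMatching {A B : Type*} [Fintype A] [Fintype B]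
    (hAB : Fintype.card A = Fintype.card B + 3)
    (hK : 2 * Fintype.card K = Fintype.card A + Fintype.card B + 1) :
    IsApprovingConfig (Fintype.card A + Fintype.card B + 2) (Fintype.card A)
      (joinMatching (A ⊕ B) K) (Sum.elim (Sum.elim (fun _ => 1) fun _ => -1) fun _ => -1) where
  card_closedNbhdFinset := by
    rintro (a | ⟨k, b⟩)
    · rw [closedNbhdFinset_joinMatching_inl, card_disjSum, card_singleton, card_univ,
        Fintype.card_prod, Fintype.card_bool]
      omega
    · rw [closedNbhdFinset_joinMatching_inr, card_disjSum, card_univ, Fintype.card_sum,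
        card_pair (by simp)]
  sign := by
    rintro ((a | a) | q) <;> simp
  card_happy := by
    rw [card_filter, Fintype.sum_sum_type, Fintype.sum_sum_type]
    simp
  card_lt := by
    refine lt_of_lt_of_le ?_ (Nat.mul_le_mul_left 2 (card_le_card_filter_inr fun ⟨k, b⟩ => ?_))
    · simp only [Fintype.card_sum, Fintype.card_prod, Fintype.card_bool]
      omega
    · rw [closedNbhdFinset_joinMatching_inr, sum_disjSum, sum_pair (by simp)]
      simp [Fintype.sum_sum_type, hAB]

end JoinMatching

lemma hmin_lower_bounds {n d : ℕ} (hd : Odd d) (hdn : d ≤ n) :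
    (n + 1) * (d + 1) ≤ 4 * (hmin n d * d) ∧ d + 1 ≤ 2 * hmin n d := by
  obtain ⟨r, rfl⟩ := hd
  have : NeZero n := ⟨by omega⟩
  obtain ⟨G, f, hc⟩ := exists_isApprovingConfig_hmin (ZMod.card n)
    (isApprovingConfig_cyclePowerGraph_one (M := n) hdn)
  have hbound := hc.card_add_one_mul_le
  rw [Fintype.card_fin] at hbound
  exact ⟨hbound, hc.add_one_le_two_mul⟩

section EightMulAddThree

variable {s d : ℕ}

lemma two_mul_add_two_le_hmin (hd : Odd d) (hdn : d ≤ 8 * s + 3) :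
    2 * s + 2 ≤ hmin (8 * s + 3) d := by
  have := (hmin_lower_bounds hd hdn).1
  by_contra! h
  nlinarith

lemma two_mul_add_two_lt_hmin (hd : Odd d) (hdn : d ≤ 8 * s + 3)
    (hout : d < 2 * s + 1 ∨ 4 * s + 3 < d) : 2 * s + 2 < hmin (8 * s + 3) d := by
  obtain ⟨hlow, hhalf⟩ := hmin_lower_bounds hd hdn
  by_contra! h
  rcases hout with hd' | hd'
  · nlinarith
  · obtain ⟨r, rfl⟩ := hd
    omega

lemma hmin_le_two_mul_add_two (hd : Odd d) (h₁ : 2 * s + 1 ≤ d) (h₂ : d ≤ 4 * s + 3) :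
    hmin (8 * s + 3) d ≤ 2 * s + 2 := by
  obtain ⟨r, rfl⟩ := hd
  rcases Nat.lt_or_ge r (2 * s + 1) with hr | hr
  · exact hmin_le (by simp only [Fintype.card_sum, ZMod.card]; omega)
      (isApprovingConfig_cyclePowerGraph_sum (by omega) (by omega))
  obtain rfl : r = 2 * s + 1 := by omega
  rcases s with _ | k
  · have hc := isApprovingConfig_top (f := ![1, 1, -1]) (by decide) (by decide)
    rw [Fintype.card_fin] at hc
    exact (hmin_le (Fintype.card_fin 3) hc).trans_eq (by decide)
  · have hc := isApprovingConfig_joinMatching (A := Fin (2 * k + 4)) (B := Fin (2 * k + 1))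
      (K := Fin (2 * k + 3)) (by simp) (by simp only [Fintype.card_fin]; omega)
    have hV : Fintype.card ((Fin (2 * k + 4) ⊕ Fin (2 * k + 1)) ⊕ Fin (2 * k + 3) × Bool) =
        8 * (k + 1) + 3 := by
      simp only [Fintype.card_sum, Fintype.card_prod, Fintype.card_fin, Fintype.card_bool]
      omega
    convert hmin_le hV hc using 2 <;> simp only [Fintype.card_fin] <;> omega

lemma hmin_eq_two_mul_add_two (hd : Odd d) (h₁ : 2 * s + 1 ≤ d) (h₂ : d ≤ 4 * s + 3) :
    hmin (8 * s + 3) d = 2 * s + 2 :=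
  le_antisymm (hmin_le_two_mul_add_two hd h₁ h₂) (two_mul_add_two_le_hmin hd (by omega))

lemma hminN_eight_mul_add_three (s : ℕ) : hminN (8 * s + 3) = 2 * s + 2 := by
  have hd : Odd (4 * s + 3) := ⟨2 * s + 1, by ring⟩
  have hmem :
      2 * s + 2 ∈ {m | ∃ d, Odd d ∧ 1 ≤ d ∧ d ≤ 8 * s + 3 ∧ m = hmin (8 * s + 3) d} :=
    ⟨4 * s + 3, hd, by omega, by omega, (hmin_eq_two_mul_add_two hd (by omega) le_rfl).symm⟩
  refine le_antisymm (Nat.sInf_le hmem) (le_csInf ⟨_, hmem⟩ ?_)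
  rintro _ ⟨d, hd, -, hdn, rfl⟩
  exact two_mul_add_two_le_hmin hd hdn

end EightMulAddThree

theorem stmt19_general (n : ℕ) (hmod : n % 8 = 3) :
    hminN n = (n + 5) / 4 ∧
    ∀ d : ℕ, Odd d → 1 ≤ d → d ≤ n →
      (hmin n d = hminN n ↔ ((n + 1) / 4 ≤ d ∧ d ≤ (n + 3) / 2)) := by
  obtain ⟨s, rfl⟩ : ∃ s, n = 8 * s + 3 := ⟨n / 8, by omega⟩
  rw [hminN_eight_mul_add_three]
  refine ⟨by omega, fun d hd _ hdn => ⟨fun heq => ?_, fun ⟨h₁, h₂⟩ => ?_⟩⟩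
  · by_contra hout
    have := two_mul_add_two_lt_hmin hd hdn (by omega)
    omega
  · exact hmin_eq_two_mul_add_two hd (by omega) (by omega)

/-- for `n ≡ 3 (mod 8)`: `hmin(n) = (n+5)/4`, attained exactly for odd
`d` with `(n+1)/4 ≤ d ≤ (n+3)/2`. -/
theorem stmt19 (n : ℕ) (hn : Odd n) (hnpos : 0 < n) (hmod : n % 8 = 3) :
    hminN n = (n + 5) / 4 ∧
    ∀ d : ℕ, Odd d → 1 ≤ d → d ≤ n →
      (hmin n d = hminN n ↔ ((n + 1) / 4 ≤ d ∧ d ≤ (n + 3) / 2)) :=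
  stmt19_general n hmod
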